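/- arXiv:2401.13624 — 3 statements merged into one kernel-verified Lean document; each statement's English description precedes it below -/
import Mathlib

section
/- Under the 2δ-separation assumption, the Bayes classifier f_c is a minimizer of the adversarial misclassification error R^δ, i.e., R^δ(f_c) = inf_f R^δ(f). -/
open MeasureTheory ENNReal Set

def advBall {d : ℕ} (X : Set (Fin d → ℝ)) (δ : ℝ) (x : Fin d → ℝ) : Set (Fin d → ℝ) :=
  {x' | x' ∈ X ∧ ‖x' - x‖ ≤ δ}

noncomputable def stdRisk {d : ℕ} (ρ : Measure ((Fin d → ℝ) × ℝ))
    (f : (Fin d → ℝ) → ℝ) : ℝ≥0∞ :=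
  ∫⁻ z, (if z.2 * f z.1 = -1 then (1 : ℝ≥0∞) else 0) ∂ρ

noncomputable def advRisk {d : ℕ} (X : Set (Fin d → ℝ)) (ρ : Measure ((Fin d → ℝ) × ℝ))
    (δ : ℝ) (f : (Fin d → ℝ) → ℝ) : ℝ≥0∞ :=
  ∫⁻ z, ⨆ x' ∈ advBall X δ z.1, (if z.2 * f x' = -1 then (1 : ℝ≥0∞) else 0) ∂ρ

/-- under the `2δ`-separation assumption, the Bayes classifier `f_c`
(a minimizer of the standard risk `R`) is a minimizer of the adversarial risk `R^δ`:
`R^δ(f_c) = inf_f R^δ(f)`. -/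
theorem bayes_minimizes_adv_risk_of_separated {d : ℕ} (X : Set (Fin d → ℝ))
    (ρ : Measure ((Fin d → ℝ) × ℝ)) (δ : ℝ) (hδ : 0 ≤ δ)
    (hρ : ∀ᵐ z ∂ρ, z.1 ∈ X)
    (fc : (Fin d → ℝ) → ℝ)
    (hval : ∀ x ∈ X, fc x = 1 ∨ fc x = -1)
    (hmin : ∀ g : (Fin d → ℝ) → ℝ, stdRisk ρ fc ≤ stdRisk ρ g)
    (hsep : ∀ xA ∈ X, ∀ xB ∈ X, fc xA = 1 → fc xB = -1 → 2 * δ ≤ ‖xA - xB‖) :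
    advRisk X ρ δ fc = ⨅ g : (Fin d → ℝ) → ℝ, advRisk X ρ δ g := by
  have key : ∀ x ∈ X, ∀ x' ∈ advBall X δ x, fc x' = fc x := by
    intro x hx x' hx'
    obtain ⟨hx'X, hd⟩ := hx'
    have heq : x' = x → fc x' = fc x := fun h => by rw [h]
    rcases hval x hx with h1 | h1 <;> rcases hval x' hx'X with h2 | h2
    · rw [h1, h2]
    · have hs := hsep x hx x' hx'X h1 h2
      rw [norm_sub_rev] at hs
      have hx'x : x' = x := by
        have : ‖x' - x‖ ≤ 0 := by linarith
        exact sub_eq_zero.mp (norm_le_zero_iff.mp this)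
      exact heq hx'x
    · have hs := hsep x' hx'X x hx h2 h1
      have hx'x : x' = x := by
        have : ‖x' - x‖ ≤ 0 := by linarith
        exact sub_eq_zero.mp (norm_le_zero_iff.mp this)
      exact heq hx'x
    · rw [h1, h2]
  have h1 : advRisk X ρ δ fc = stdRisk ρ fc := by
    unfold advRisk stdRisk
    refine lintegral_congr_ae ?_
    filter_upwards [hρ] with z hz
    apply le_antisymm
    · exact iSup₂_le fun x' hx' => by rw [key z.1 hz x' hx']
    · exact le_iSup₂_of_le z.1 ⟨hz, by simp [hδ]⟩ le_rfl
  have h2 : ∀ g, stdRisk ρ g ≤ advRisk X ρ δ g := by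
    intro g
    refine lintegral_mono_ae ?_
    filter_upwards [hρ] with z hz
    exact le_iSup₂_of_le z.1 ⟨hz, by simp [hδ]⟩ le_rfl
  refine le_antisymm (le_iInf fun g => ?_) (iInf_le _ fc)
  calc advRisk X ρ δ fc = stdRisk ρ fc := h1
    _ ≤ stdRisk ρ g := hmin g
    _ ≤ advRisk X ρ δ g := h2 g
end

section
/- Let f be bounded by c and f_ρ bounded by M, and suppose y ∈ [-M, M] ρ-a.s. Then for any δ ≥ 0, E^δ(f) - E(f) ≤ (2c + 2M) ∫_X sup_{x' ∈ B_{δ,∞}(x)} |f(x') - f(x)| dρ_X. -/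
open MeasureTheory Set

/-- if `‖f‖_∞ ≤ c` and `|y| ≤ M` a.s., then
`E^δ(f) - E(f) ≤ (2c + 2M) ∫_X sup_{x' ∈ B_{δ,∞}(x)} |f(x') - f(x)| dρ_X`. -/
theorem adv_gap_bound {d : ℕ} (X : Set (Fin d → ℝ))
    (ρ : Measure ((Fin d → ℝ) × ℝ)) [IsProbabilityMeasure ρ]
    (ρX : Measure (Fin d → ℝ)) (hmap : ρ.map Prod.fst = ρX)
    (f : (Fin d → ℝ) → ℝ) (c M δ : ℝ) (hδ : 0 ≤ δ)
    (hc : ∀ x, |f x| ≤ c) (hmf : Measurable f)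
    (hM : ∀ᵐ z ∂ρ, |z.2| ≤ M)
    (hρ : ∀ᵐ z ∂ρ, z.1 ∈ X)
    (hmeas : AEStronglyMeasurable
      (fun x => ⨆ x' ∈ advBall X δ x, |f x' - f x|) ρX)
    (h1 : Integrable (fun z : (Fin d → ℝ) × ℝ =>
      ⨆ x' ∈ advBall X δ z.1, (f x' - z.2) ^ 2) ρ)
    (h2 : Integrable (fun z : (Fin d → ℝ) × ℝ => (f z.1 - z.2) ^ 2) ρ)
    (h3 : Integrable (fun x => ⨆ x' ∈ advBall X δ x, |f x' - f x|) ρX) :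
    (∫ z, ⨆ x' ∈ advBall X δ z.1, (f x' - z.2) ^ 2 ∂ρ) -
      (∫ z, (f z.1 - z.2) ^ 2 ∂ρ) ≤
    (2 * c + 2 * M) * ∫ x, ⨆ x' ∈ advBall X δ x, |f x' - f x| ∂ρX := by
  classical
  have hc0 : 0 ≤ c := le_trans (abs_nonneg _) (hc fun _ => 0)
  haveI : (MeasureTheory.ae ρ).NeBot :=
    ae_neBot.mpr (IsProbabilityMeasure.ne_zero ρ)
  obtain ⟨z0, hz0⟩ := hM.exists
  have hM0 : 0 ≤ M := le_trans (abs_nonneg _) hz0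
  set G : (Fin d → ℝ) → ℝ := fun x => ⨆ x' ∈ advBall X δ x, |f x' - f x| with hGdef
  have hGbdd : ∀ x, BddAbove (Set.range fun x' =>
      ⨆ _ : x' ∈ advBall X δ x, |f x' - f x|) := by
    intro x
    refine ⟨2 * c, ?_⟩
    rintro _ ⟨x', rfl⟩
    refine Real.iSup_le (fun h => ?_) (by linarith)
    have := hc x'
    have := hc x
    have : |f x' - f x| ≤ |f x'| + |f x| := abs_sub _ _
    have h1 := hc x'
    have h2 := hc x
    linarith
  have hGle : ∀ x x', x' ∈ advBall X δ x → |f x' - f x| ≤ G x := by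
    intro x x' h
    have h' := le_ciSup (hGbdd x) x'
    rwa [ciSup_pos h] at h'
  have hG0 : ∀ x, x ∈ X → 0 ≤ G x := by
    intro x hx
    have hx' : x ∈ advBall X δ x := ⟨hx, by simp [hδ]⟩
    exact le_trans (abs_nonneg _) (hGle x x hx')
  have key : ∀ᵐ z ∂ρ, (⨆ x' ∈ advBall X δ z.1, (f x' - z.2) ^ 2) -
      (f z.1 - z.2) ^ 2 ≤ (2 * c + 2 * M) * G z.1 := by
    filter_upwards [hM, hρ] with z hy hx
    have hg0 : 0 ≤ G z.1 := hG0 _ hx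
    have hrhs : 0 ≤ (2 * c + 2 * M) * G z.1 + (f z.1 - z.2) ^ 2 := by positivity
    rw [sub_le_iff_le_add]
    refine Real.iSup_le (fun x' => Real.iSup_le (fun h => ?_) hrhs) hrhs
    have hfg : |f x' - f z.1| ≤ G z.1 := hGle _ _ h
    have h1 := abs_le.mp (hc x')
    have h2 := abs_le.mp (hc z.1)
    have h3 := abs_le.mp hy
    have h4 := abs_le.mp (le_refl |f x' - f z.1|)
    have h5 : f x' - f z.1 ≤ G z.1 := le_trans (le_abs_self _) hfg
    have h6 : -(G z.1) ≤ f x' - f z.1 := by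
      have := neg_abs_le (f x' - f z.1); linarith
    nlinarith [sq_nonneg (f x' - f z.1), sq_nonneg (f x' + f z.1 - 2 * z.2)]
  -- measurability / integrability transfers
  have hmeas' : AEStronglyMeasurable G (ρ.map Prod.fst) := by rw [hmap]; exact hmeas
  have hint : Integrable (fun z : (Fin d → ℝ) × ℝ => G z.1) ρ := by
    have := (integrable_map_measure hmeas' measurable_fst.aemeasurable).mp
      (by rw [hmap]; exact h3)
    exact this
  calc (∫ z, ⨆ x' ∈ advBall X δ z.1, (f x' - z.2) ^ 2 ∂ρ) -
      (∫ z, (f z.1 - z.2) ^ 2 ∂ρ)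
      = ∫ z, ((⨆ x' ∈ advBall X δ z.1, (f x' - z.2) ^ 2) - (f z.1 - z.2) ^ 2) ∂ρ :=
        (integral_sub h1 h2).symm
    _ ≤ ∫ z, (2 * c + 2 * M) * G z.1 ∂ρ :=
        integral_mono_ae (h1.sub h2) (hint.const_mul _) key
    _ = (2 * c + 2 * M) * ∫ z, G z.1 ∂ρ := integral_const_mul _ _
    _ = (2 * c + 2 * M) * ∫ x, G x ∂ρX := by
        rw [← hmap, integral_map measurable_fst.aemeasurable hmeas']
end

section
/- If f_ρ is B-Lipschitz (Euclidean norm) and bounded by B, y ∈ [-M,M] a.s., and the marginal distortion bound ∫ g dρ_X ≤ ‖J_ρ‖ ∫ g dx holds for nonnegative g, then the robustness gap of the regression function satisfies E^δ(f_ρ) - E(f_ρ) ≤ (2B + 2M) ‖J_ρ‖ B √d δ. -/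
open MeasureTheory Set Finset

/-!
The loss `(f x' - y)² - (f x - y)²` factors as `(f x' - f x) · ((f x' - y) + (f x - y))`:
the first factor is at most `B √d δ` on the `ℓ∞`-ball of radius `δ` (an `ℓ∞`-ball of radius `δ`
lies in the Euclidean ball of radius `√d δ`), the second at most `2B + 2M`. So the adversarial
loss exceeds the standard one pointwise by at most `(2B + 2M) B √d δ`, and integrating against
the probability measure `ρ` bounds the gap by the same constant. Testing the distortion bound
on `g = 1` gives `1 ≤ ‖J_ρ‖`, since `X ⊆ [0,1]^d` has volume at most `1`.
-/

theorem Real.sqrt_sum_sq_le_sqrt_card_mul_norm {ι : Type*} [Fintype ι] (v : ι → ℝ) :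
    √(∑ i, v i ^ 2) ≤ √(Fintype.card ι) * ‖v‖ := by
  have hsum : ∑ i, v i ^ 2 ≤ Fintype.card ι * ‖v‖ ^ 2 := by
    calc ∑ i, v i ^ 2 ≤ ∑ _i : ι, ‖v‖ ^ 2 := Finset.sum_le_sum fun i _ => by
          simpa using pow_le_pow_left₀ (norm_nonneg _) (norm_le_pi_norm v i) 2
      _ = Fintype.card ι * ‖v‖ ^ 2 := by simp
  calc √(∑ i, v i ^ 2) ≤ √(Fintype.card ι * ‖v‖ ^ 2) := Real.sqrt_le_sqrt hsum
    _ = √(Fintype.card ι) * ‖v‖ := by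
      rw [Real.sqrt_mul (Nat.cast_nonneg _), Real.sqrt_sq (norm_nonneg _)]

theorem abs_sub_le_of_mem_advBall {d : ℕ} {X : Set (Fin d → ℝ)} {f : (Fin d → ℝ) → ℝ}
    {B δ : ℝ} (hB : 0 ≤ B)
    (hLip : ∀ u v : Fin d → ℝ, |f u - f v| ≤ B * √(∑ k : Fin d, (u k - v k) ^ 2))
    {x x' : Fin d → ℝ} (hx' : x' ∈ advBall X δ x) :
    |f x' - f x| ≤ B * √d * δ := by
  calc |f x' - f x| ≤ B * √(∑ k, (x' - x) k ^ 2) := hLip x' x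
    _ ≤ B * (√d * ‖x' - x‖) := by
      gcongr
      simpa using Real.sqrt_sum_sq_le_sqrt_card_mul_norm (x' - x)
    _ ≤ B * √d * δ := by
      rw [← mul_assoc]
      gcongr
      exact hx'.2

theorem sq_sub_sq_sub_le {a a' y B M : ℝ} (ha : |a| ≤ B) (ha' : |a'| ≤ B) (hy : |y| ≤ M) :
    (a' - y) ^ 2 - (a - y) ^ 2 ≤ (2 * B + 2 * M) * |a' - a| := by
  have hsum : |(a' - y) + (a - y)| ≤ 2 * B + 2 * M := by
    rw [abs_le] at *
    constructor <;> linarith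
  calc (a' - y) ^ 2 - (a - y) ^ 2 = (a' - a) * ((a' - y) + (a - y)) := by ring
    _ ≤ |a' - a| * |(a' - y) + (a - y)| := by
      rw [← abs_mul]
      exact le_abs_self _
    _ ≤ |a' - a| * (2 * B + 2 * M) := by gcongr
    _ = (2 * B + 2 * M) * |a' - a| := mul_comm _ _

theorem iSup_sq_sub_le_of_abs_sub_le {α : Type*} {S : Set α} {f : α → ℝ} {x : α}
    {y B M L : ℝ} (hf : ∀ u, |f u| ≤ B) (hy : |y| ≤ M) (hL : 0 ≤ L)
    (hS : ∀ x' ∈ S, |f x' - f x| ≤ L) :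
    ⨆ x' ∈ S, (f x' - y) ^ 2 ≤ (f x - y) ^ 2 + (2 * B + 2 * M) * L := by
  have hB : 0 ≤ B := (abs_nonneg _).trans (hf x)
  have hM : 0 ≤ M := (abs_nonneg _).trans hy
  have hbound : 0 ≤ (f x - y) ^ 2 + (2 * B + 2 * M) * L := by positivity
  refine Real.iSup_le (fun x' => Real.iSup_le (fun hx' => ?_) hbound) hbound
  have := sq_sub_sq_sub_le (hf x) (hf x') hy
  have := mul_le_mul_of_nonneg_left (hS x' hx') (by positivity : 0 ≤ 2 * B + 2 * M)
  linarith

theorem integral_sub_integral_le_of_ae_le_add {Ω : Type*} [MeasurableSpace Ω] {μ : Measure Ω}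
    [IsProbabilityMeasure μ] {f g : Ω → ℝ} {C : ℝ} (hf : Integrable f μ) (hg : Integrable g μ)
    (hfg : ∀ᵐ ω ∂μ, f ω ≤ g ω + C) :
    ∫ ω, f ω ∂μ - ∫ ω, g ω ∂μ ≤ C := by
  have := integral_mono_ae hf (hg.add (integrable_const C)) hfg
  rw [Pi.add_def, integral_add hg (integrable_const C), integral_const, probReal_univ, one_smul] at this
  linarith

theorem volume_le_one_of_forall_mem_Icc {ι : Type*} [Fintype ι] {X : Set (ι → ℝ)}
    (hX : ∀ x ∈ X, ∀ k, x k ∈ Icc (0 : ℝ) 1) :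
    volume X ≤ 1 := by
  calc volume X ≤ volume (Set.pi univ fun _ : ι => Icc (0 : ℝ) 1) :=
        measure_mono fun x hx => Set.mem_univ_pi.mpr (hX x hx)
    _ = 1 := by simp [Real.volume_Icc_pi]

theorem one_le_of_forall_integral_le_mul_setIntegral {α : Type*} [MeasurableSpace α]
    {μ ν : Measure α} [IsProbabilityMeasure μ] {X : Set α} {J : ℝ} (hJ0 : 0 ≤ J)
    (hX : ν X ≤ 1)
    (hJ : ∀ g : α → ℝ, Measurable g → (∀ x, 0 ≤ g x) → ∫ x, g x ∂μ ≤ J * ∫ x in X, g x ∂ν) :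
    1 ≤ J := by
  have hνX : ν.real X ≤ 1 := ENNReal.toReal_le_of_le_ofReal zero_le_one (by simpa using hX)
  have h := hJ (fun _ => 1) measurable_const fun _ => zero_le_one
  simp only [integral_const, probReal_univ, measureReal_restrict_apply_univ, smul_eq_mul,
    mul_one] at h
  nlinarith

theorem regression_robust_gap_bound_general {d : ℕ} (X : Set (Fin d → ℝ))
    (hXcube : ∀ x ∈ X, ∀ k, x k ∈ Icc (0 : ℝ) 1)
    (ρ : Measure ((Fin d → ℝ) × ℝ)) [IsProbabilityMeasure ρ]
    (ρX : Measure (Fin d → ℝ)) (hmap : ρ.map Prod.fst = ρX)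
    (fρ : (Fin d → ℝ) → ℝ) (B M J δ : ℝ) (hδ : 0 ≤ δ) (hJ0 : 0 ≤ J)
    (hB : ∀ x, |fρ x| ≤ B)
    (hLip : ∀ u v : Fin d → ℝ,
      |fρ u - fρ v| ≤ B * Real.sqrt (∑ k : Fin d, (u k - v k) ^ 2))
    (hM : ∀ᵐ z ∂ρ, |z.2| ≤ M)
    (hJ : ∀ g : (Fin d → ℝ) → ℝ, Measurable g → (∀ x, 0 ≤ g x) →
      ∫ x, g x ∂ρX ≤ J * ∫ x in X, g x)
    (h1 : Integrable (fun z : (Fin d → ℝ) × ℝ =>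
      ⨆ x' ∈ advBall X δ z.1, (fρ x' - z.2) ^ 2) ρ)
    (h2 : Integrable (fun z : (Fin d → ℝ) × ℝ => (fρ z.1 - z.2) ^ 2) ρ) :
    (∫ z, ⨆ x' ∈ advBall X δ z.1, (fρ x' - z.2) ^ 2 ∂ρ) -
      (∫ z, (fρ z.1 - z.2) ^ 2 ∂ρ) ≤
    (2 * B + 2 * M) * J * (B * Real.sqrt d * δ) := by
  have hB0 : 0 ≤ B := (abs_nonneg _).trans (hB 0)
  have hM0 : 0 ≤ M := by
    obtain ⟨z, hz⟩ := hM.exists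
    exact (abs_nonneg _).trans hz
  have : IsProbabilityMeasure ρX := hmap ▸ Measure.isProbabilityMeasure_map (by fun_prop)
  have hJ1 : 1 ≤ J :=
    one_le_of_forall_integral_le_mul_setIntegral hJ0 (volume_le_one_of_forall_mem_Icc hXcube) hJ
  calc _ ≤ (2 * B + 2 * M) * (B * √d * δ) :=
        integral_sub_integral_le_of_ae_le_add h1 h2 <| hM.mono fun z hz =>
          iSup_sq_sub_le_of_abs_sub_le hB hz (by positivity) fun _ hx' =>
            abs_sub_le_of_mem_advBall hB0 hLip hx'
    _ ≤ J * ((2 * B + 2 * M) * (B * √d * δ)) := le_mul_of_one_le_left (by positivity) hJ1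
    _ = (2 * B + 2 * M) * J * (B * √d * δ) := by ring

/-- if the regression function `f_ρ` is `B`-Lipschitz (Euclidean norm)
and bounded by `B`, labels lie in `[-M,M]` a.s., and the marginal distortion bound
`∫ g dρ_X ≤ ‖J_ρ‖ ∫ g dx` holds for nonnegative `g`, then the robustness gap of the
regression function satisfies `E^δ(f_ρ) - E(f_ρ) ≤ (2B + 2M) ‖J_ρ‖ B √d δ`. -/
theorem regression_robust_gap_bound {d : ℕ} (X : Set (Fin d → ℝ))
    (hXcube : ∀ x ∈ X, ∀ k, x k ∈ Icc (0 : ℝ) 1)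
    (ρ : Measure ((Fin d → ℝ) × ℝ)) [IsProbabilityMeasure ρ]
    (ρX : Measure (Fin d → ℝ)) (hmap : ρ.map Prod.fst = ρX)
    (fρ : (Fin d → ℝ) → ℝ) (B M J δ : ℝ) (hδ : 0 ≤ δ) (hJ0 : 0 ≤ J)
    (hB : ∀ x, |fρ x| ≤ B) (hmf : Measurable fρ)
    (hLip : ∀ u v : Fin d → ℝ,
      |fρ u - fρ v| ≤ B * Real.sqrt (∑ k : Fin d, (u k - v k) ^ 2))
    (hM : ∀ᵐ z ∂ρ, |z.2| ≤ M)
    (hρ : ∀ᵐ z ∂ρ, z.1 ∈ X)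
    (hJ : ∀ g : (Fin d → ℝ) → ℝ, Measurable g → (∀ x, 0 ≤ g x) →
      ∫ x, g x ∂ρX ≤ J * ∫ x in X, g x)
    (hmeasg : Measurable (fun x => ⨆ x' ∈ advBall X δ x, |fρ x' - fρ x|))
    (h1 : Integrable (fun z : (Fin d → ℝ) × ℝ =>
      ⨆ x' ∈ advBall X δ z.1, (fρ x' - z.2) ^ 2) ρ)
    (h2 : Integrable (fun z : (Fin d → ℝ) × ℝ => (fρ z.1 - z.2) ^ 2) ρ) :
    (∫ z, ⨆ x' ∈ advBall X δ z.1, (fρ x' - z.2) ^ 2 ∂ρ) -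
      (∫ z, (fρ z.1 - z.2) ^ 2 ∂ρ) ≤
    (2 * B + 2 * M) * J * (B * Real.sqrt d * δ) :=
  regression_robust_gap_bound_general X hXcube ρ ρX hmap fρ B M J δ hδ hJ0 hB hLip hM hJ h1 h2
end
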